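/- arXiv:1609.01633 — 3 statements merged into one kernel-verified Lean document; each statement's English description precedes it below -/
import Mathlib

section
/- (Representation Formula) Let U ⊂ ℍ be axially symmetric, let f : U → ℍ be slice hyperholomorphic, i.e. f(x₀ + i_x x₁) = α(x₀,x₁) + i_x β(x₀,x₁) with α even and β odd in x₁. Then for any i ∈ S and any x = x₀ + i_x x₁ ∈ U, setting x_i = x₀ + i x₁, one has f(x) = (1/2)(1 - i_x i) f(x_i) + (1/2)(1 + i_x i) f(\overline{x_i}). -/
noncomputable section

abbrev HQ := Quaternion ℝ

/-- The set of purely imaginary unit quaternions. -/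
def Sph : Set HQ := {x : HQ | x.re = 0 ∧ ‖x‖ = 1}

/-- A set `U ⊆ ℍ` is axially symmetric if together with any point `x = x₀ + i x₁`
it contains the whole sphere `[x] = {x₀ + j x₁ : j ∈ S}`. -/
def AxSymm (U : Set HQ) : Prop :=
    ∀ x ∈ U, ∀ j ∈ Sph, (x.re : HQ) + ‖x.im‖ • j ∈ U

lemma sph_mul_self {I : HQ} (hI : I ∈ Sph) : I * I = -1 := by
  obtain ⟨hre, hnorm⟩ := hI
  have hstar : star I = -I := by
    ext <;> simp [hre]
  have h2 : star I * I = Quaternion.normSq I := by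
    rw [Quaternion.star_mul_self]
  have h3 : (Quaternion.normSq I : ℝ) = 1 := by
    have := Quaternion.normSq_eq_norm_mul_self (a := I)
    rw [hnorm] at this; simpa using this
  rw [hstar] at h2
  have : -(I * I) = 1 := by rw [neg_mul] at h2; rw [h2, h3]; norm_num
  exact neg_eq_iff_eq_neg.mp this

lemma sph_neg {I : HQ} (hI : I ∈ Sph) : -I ∈ Sph := by
  obtain ⟨hre, hnorm⟩ := hI
  exact ⟨by simp [hre], by simp [hnorm]⟩

lemma re_im_calc (x0 x1 : ℝ) {ix : HQ} (hix : ix ∈ Sph) :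
    ((x0 : HQ) + x1 • ix).re = x0 ∧ ‖((x0 : HQ) + x1 • ix).im‖ = |x1| := by
  obtain ⟨hre, hnorm⟩ := hix
  refine ⟨by simp [hre], ?_⟩
  have him : ((x0:HQ) + x1 • ix).im = x1 • ix := by
    ext <;> simp [hre]
  rw [him, norm_smul, hnorm]
  simp

theorem stmt5 (U : Set HQ) (hU : AxSymm U) (f : HQ → HQ) (α β : ℝ → ℝ → HQ)
    (hα : ∀ x0 x1 : ℝ, α x0 (-x1) = α x0 x1)
    (hβ : ∀ x0 x1 : ℝ, β x0 (-x1) = -β x0 x1)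
    (hf : ∀ (x0 x1 : ℝ), ∀ I ∈ Sph, (x0 : HQ) + x1 • I ∈ U →
      f ((x0 : HQ) + x1 • I) = α x0 x1 + I * β x0 x1) :
    ∀ I ∈ Sph, ∀ (x0 x1 : ℝ), ∀ ix ∈ Sph, (x0 : HQ) + x1 • ix ∈ U →
      f ((x0 : HQ) + x1 • ix) =
        (2 : ℝ)⁻¹ • ((1 - ix * I) * f ((x0 : HQ) + x1 • I)) +
        (2 : ℝ)⁻¹ • ((1 + ix * I) * f ((x0 : HQ) - x1 • I)) := by
  intro I hI x0 x1 ix hix hxU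
  obtain ⟨hre, him⟩ := re_im_calc x0 x1 hix
  -- membership of the two points on the I-slice
  have hmem : ∀ j ∈ Sph, (x0 : HQ) + |x1| • j ∈ U := by
    intro j hj
    have := hU _ hxU j hj
    rwa [hre, him] at this
  have hmemI : (x0 : HQ) + x1 • I ∈ U ∧ (x0 : HQ) + (-x1) • I ∈ U := by
    rcases le_or_gt 0 x1 with h | h
    · have h1 := hmem I hI
      have h2 := hmem (-I) (sph_neg hI)
      rw [abs_of_nonneg h] at h1 h2
      exact ⟨h1, by rwa [smul_neg, ← neg_smul] at h2⟩
    · have h1 := hmem I hI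
      have h2 := hmem (-I) (sph_neg hI)
      rw [abs_of_neg h] at h1 h2
      exact ⟨by rwa [neg_smul_neg] at h2, h1⟩
  have e1 := hf x0 x1 ix hix hxU
  have e2 := hf x0 x1 I hI hmemI.1
  have e3 := hf x0 (-x1) I hI hmemI.2
  rw [hα, hβ] at e3
  have hsub : (x0 : HQ) - x1 • I = (x0 : HQ) + (-x1) • I := by
    rw [neg_smul, sub_eq_add_neg]
  rw [e1, e2, hsub, e3]
  set a := α x0 x1
  set b := β x0 x1
  have hI2 : I * I = -1 := sph_mul_self hI
  rw [← smul_add]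
  have key : (1 - ix * I) * (a + I * b) + (1 + ix * I) * (a + I * -b)
      = 2 * a + 2 * (ix * b) := by
    have expand : (1 - ix * I) * (a + I * b) + (1 + ix * I) * (a + I * -b)
        = 2 * a - 2 * (ix * ((I * I) * b)) := by noncomm_ring
    rw [expand, hI2]
    noncomm_ring
  rw [key]
  have : ((2:ℝ)⁻¹ • (2 * a + 2 * (ix * b)) : HQ)
      = (2:ℝ)⁻¹ • ((2:ℝ) • (a + ix * b)) := by
    congr 1
    rw [smul_add, two_smul ℝ, two_smul ℝ, two_mul, two_mul]
  rw [this, smul_smul]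
  norm_num
end
end

section
/- If a finite nonnegative Radon measure μ on the quaternionic unit ball 𝔻 admits a vanishing slice Carleson decomposition, then μ is a vanishing Carleson measure: μ(S(θ₀,h))/h → 0 as h → 0, uniformly in θ₀ ∈ [0,π]. -/
open MeasureTheory Real
open scoped ENNReal

noncomputable section

/-- The boundary point `e^{iθ} = cos θ + (sin θ) i` on the circle `∂𝔻_i`. -/
def bpt (i : HQ) (θ : ℝ) : HQ := (Real.cos θ : HQ) + Real.sin θ • i

/-- The Carleson box `S_i(θ₀,h) = {re^{iθ} ∈ 𝔻_i : |θ - θ₀| ≤ h, 1-h ≤ r ≤ 1}`. -/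
def SBox (i : HQ) (θ0 h : ℝ) : Set HQ :=
  {x : HQ | ∃ r θ : ℝ, 1 - h ≤ r ∧ r < 1 ∧ |θ - θ0| ≤ h ∧ x = r • bpt i θ}

/-- The symmetric box `S(θ₀,h) = ⋃_{i ∈ S} S_i(θ₀,h)`. -/
def SymBox (θ0 h : ℝ) : Set HQ := ⋃ i ∈ Sph, SBox i θ0 h

/-- The upper half slice `𝔻_i⁺ = {x₀ + i x₁ ∈ 𝔻 : x₁ > 0}`. -/
def HalfSlice (i : HQ) : Set HQ :=
  {x : HQ | x ∈ Metric.ball (0 : HQ) 1 ∧ ∃ x0 x1 : ℝ, 0 < x1 ∧ x = (x0 : HQ) + x1 • i}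

instance : MeasurableSpace HQ := borel HQ
instance : BorelSpace HQ := ⟨rfl⟩

/-! Auxiliary lemmas -/

def iQ : HQ := ⟨0, 1, 0, 0⟩

lemma norm_q (a : HQ) : ‖a‖ = Real.sqrt (Quaternion.normSq a) := by
  rw [Quaternion.normSq_eq_norm_mul_self, Real.sqrt_mul_self (norm_nonneg _)]

lemma iQ_mem_Sph : iQ ∈ Sph := by
  constructor
  · rfl
  · rw [norm_q, Quaternion.normSq_def']; norm_num [iQ]

lemma norm_mix {i : HQ} (hi : i ∈ Sph) (a b : ℝ) :
    ‖(a : HQ) + b • i‖ = Real.sqrt (a ^ 2 + b ^ 2) := by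
  obtain ⟨hre, hn⟩ := hi
  have h1 : Quaternion.normSq i = 1 := by
    rw [Quaternion.normSq_eq_norm_mul_self, hn]; ring
  rw [norm_q]
  congr 1
  rw [Quaternion.normSq_def'] at h1 ⊢
  simp only [Quaternion.re_add, Quaternion.imI_add, Quaternion.imJ_add, Quaternion.imK_add,
    Quaternion.re_coe, Quaternion.imI_coe, Quaternion.imJ_coe, Quaternion.imK_coe,
    Quaternion.re_smul, Quaternion.imI_smul, Quaternion.imJ_smul, Quaternion.imK_smul,
    smul_eq_mul, hre] at *
  nlinarith [h1]

lemma re_mix (i : HQ) (a b : ℝ) : ((a : HQ) + b • i).re = a + b * i.re := by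
  simp [Quaternion.re_smul, smul_eq_mul]

lemma smul_bpt (i : HQ) (r θ : ℝ) :
    r • bpt i θ = ((r * Real.cos θ : ℝ) : HQ) + (r * Real.sin θ) • i := by
  rw [bpt, smul_add, smul_smul, Quaternion.smul_coe]

lemma cos_mem {θ0 h θ : ℝ} (h0 : 0 ≤ θ0) (hπ : θ0 ≤ π) (hh : 0 < h) (hh2 : h ≤ 1/2)
    (hθ : |θ - θ0| ≤ h) :
    Real.cos (min (θ0 + h) π) ≤ Real.cos θ ∧ Real.cos θ ≤ Real.cos (max (θ0 - h) 0) := by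
  have habs := abs_le.mp hθ
  have hpi3 := Real.pi_gt_three
  rcases le_or_gt θ π with hle | hgt
  · have h1 : Real.cos θ = Real.cos |θ| := (Real.cos_abs θ).symm
    have habs2 : |θ| ≤ θ0 + h := by
      rw [abs_le]; constructor <;> [linarith; linarith]
    have habs3 : |θ| ≤ π := by
      rw [abs_le]; constructor <;> [linarith; linarith]
    constructor
    · rw [h1]
      exact Real.cos_le_cos_of_nonneg_of_le_pi (abs_nonneg θ) (min_le_right _ _)
        (le_min habs2 habs3)
    · rw [h1]
      refine Real.cos_le_cos_of_nonneg_of_le_pi (le_max_right _ _) habs3 ?_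
      rcases le_or_gt 0 θ with h2 | h2
      · rw [abs_of_nonneg h2]; exact max_le (by linarith) (by linarith)
      · rw [abs_of_neg h2]; exact max_le (by linarith) (by linarith)
  · have hmin : min (θ0 + h) π = π := min_eq_right (by linarith)
    constructor
    · rw [hmin, Real.cos_pi]; exact Real.neg_one_le_cos θ
    · have h2 : Real.cos θ = Real.cos (2 * π - θ) := by
        rw [Real.cos_sub]
        simp [Real.cos_two_pi, Real.sin_two_pi]
      rw [h2]
      refine Real.cos_le_cos_of_nonneg_of_le_pi (le_max_right _ _) (by linarith) ?_
      exact max_le (by linarith) (by linarith)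

theorem stmt11 (μ μR ν : Measure HQ) (μp : HQ → Measure HQ)
    [IsFiniteMeasure μ] [IsFiniteMeasure ν]
    -- `μ_ℝ` is supported on `𝔻 ∩ ℝ`
    (hμR : μR {x : HQ | ¬(x.im = 0 ∧ ‖x‖ < 1)} = 0)
    -- `ν` is supported on the sphere `S`
    (hν : ν Sphᶜ = 0)
    -- each `μ_i⁺` is a probability measure on the half slice `𝔻_i⁺`
    (hprob : ∀ i ∈ Sph, IsProbabilityMeasure (μp i))
    (hsupp : ∀ i ∈ Sph, μp i (HalfSlice i)ᶜ = 0)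
    -- the slice decomposition `∫ f dμ = ∫ f dμ_ℝ + ∫_S ∫_{𝔻_i⁺} f dμ_i⁺ dν(i)`
    (hdec : ∀ g : HQ → ℝ≥0∞, Measurable g →
      ∫⁻ x, g x ∂μ = (∫⁻ x, g x ∂μR) + ∫⁻ i in Sph, (∫⁻ x, g x ∂(μp i)) ∂ν)
    -- the decomposition is vanishing slice Carleson with rate function `E`
    (E : ℝ → ℝ) (hE0 : ∀ h : ℝ, 0 ≤ E h)
    (hElim : Filter.Tendsto E (nhdsWithin 0 (Set.Ioi 0)) (nhds 0))
    (hER : ∀ i ∈ Sph, ∀ θ0 h : ℝ, 0 < h →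
      μR (SBox i θ0 h) ≤ ENNReal.ofReal (E h * h))
    (hEp : ∀ i ∈ Sph, ∀ θ0 h : ℝ, 0 < h →
      μp i (SBox i θ0 h) ≤ ENNReal.ofReal (E h * h)) :
    -- `μ(S(θ₀,h))/h → 0` as `h → 0`, uniformly in `θ₀ ∈ [0,π]`
    ∀ ε : ℝ, 0 < ε → ∃ δ : ℝ, 0 < δ ∧ ∀ h : ℝ, 0 < h → h < δ →
      ∀ θ0 ∈ Set.Icc (0 : ℝ) Real.pi, μ (SymBox θ0 h) ≤ ENNReal.ofReal (ε * h) := by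
  intro ε hε
  set C : ℝ := (ν Set.univ).toReal with hCdef
  have hC : 0 ≤ C := ENNReal.toReal_nonneg
  have h1C : (0:ℝ) < 1 + C := by linarith
  obtain ⟨δ1, hδ1, hδ1E⟩ := Metric.tendsto_nhdsWithin_nhds.mp hElim (ε / (1 + C))
    (div_pos hε h1C)
  refine ⟨min δ1 (1/2), lt_min hδ1 (by norm_num), ?_⟩
  intro h hh hhδ θ0 hθ0
  obtain ⟨hθ0a, hθ0b⟩ := hθ0
  have hh2 : h ≤ 1/2 := le_of_lt (lt_of_lt_of_le hhδ (min_le_right _ _))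
  have hEh : E h < ε / (1 + C) := by
    have := hδ1E (Set.mem_Ioi.mpr hh)
      (by rw [Real.dist_eq, sub_zero, abs_of_pos hh]; exact lt_of_lt_of_le hhδ (min_le_left _ _))
    rwa [Real.dist_eq, sub_zero, abs_of_nonneg (hE0 h)] at this
  -- the enlarged measurable box
  set α : ℝ := max (θ0 - h) 0 with hαdef
  set β : ℝ := min (θ0 + h) π with hβdef
  have hα0 : 0 ≤ α := le_max_right _ _
  have hβπ : β ≤ π := min_le_right _ _
  have hαβ : α ≤ β := max_le (le_min (by linarith) (by linarith)) (le_min (by linarith) Real.pi_pos.le)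
  set A : Set HQ := {x : HQ | (1 - h ≤ ‖x‖ ∧ ‖x‖ < 1) ∧
      ‖x‖ * Real.cos β ≤ x.re ∧ x.re ≤ ‖x‖ * Real.cos α} with hAdef
  have hnm : Measurable fun x : HQ => ‖x‖ := continuous_norm.measurable
  have hrm : Measurable fun x : HQ => x.re := Quaternion.continuous_re.measurable
  have measA : MeasurableSet A := by
    refine MeasurableSet.inter (MeasurableSet.inter ?_ ?_) (MeasurableSet.inter ?_ ?_)
    · exact measurableSet_le measurable_const hnm
    · exact measurableSet_lt hnm measurable_const
    · exact measurableSet_le (hnm.mul measurable_const) hrm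
    · exact measurableSet_le hrm (hnm.mul measurable_const)
  -- inclusion 1 : SymBox ⊆ A
  have incl1 : SymBox θ0 h ⊆ A := by
    rintro x hx
    simp only [SymBox, Set.mem_iUnion] at hx
    obtain ⟨i, hi, r, θ, hr1, hr2, hθ, rfl⟩ := hx
    have hrpos : 0 < r := by linarith
    have hb : ‖bpt i θ‖ = 1 := by
      rw [bpt, norm_mix hi]
      rw [show Real.cos θ ^ 2 + Real.sin θ ^ 2 = 1 by
        rw [add_comm]; exact Real.sin_sq_add_cos_sq θ]
      exact Real.sqrt_one
    have hnx : ‖r • bpt i θ‖ = r := by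
      rw [norm_smul, hb, mul_one, Real.norm_eq_abs, abs_of_pos hrpos]
    have hre : (r • bpt i θ).re = r * Real.cos θ := by
      rw [smul_bpt, re_mix, hi.1, mul_zero, add_zero]
    obtain ⟨hc1, hc2⟩ := cos_mem hθ0a hθ0b hh hh2 hθ
    refine ⟨⟨by rw [hnx]; exact hr1, by rw [hnx]; exact hr2⟩, ?_, ?_⟩
    · rw [hnx, hre]; exact mul_le_mul_of_nonneg_left hc1 hrpos.le
    · rw [hnx, hre]; exact mul_le_mul_of_nonneg_left hc2 hrpos.le
  -- inclusion 2 : A ∩ real line ⊆ SBox iQ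
  have incl2 : ∀ x ∈ A, x.im = 0 ∧ ‖x‖ < 1 → x ∈ SBox iQ θ0 h := by
    rintro x ⟨⟨hx1, hx2⟩, hx3, hx4⟩ ⟨him, -⟩
    have hxeq : x = ((x.re : ℝ) : HQ) := by
      conv_lhs => rw [← Quaternion.re_add_im x]
      rw [him, add_zero]
    have hnx : ‖x‖ = |x.re| := by
      calc ‖x‖ = ‖((x.re : ℝ) : HQ)‖ := by rw [← hxeq]
        _ = |x.re| := by rw [Quaternion.norm_coe, Real.norm_eq_abs]
    have hxne : x.re ≠ 0 := by
      intro h0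
      rw [h0, abs_zero] at hnx
      rw [hnx] at hx1; linarith
    rcases lt_or_gt_of_ne hxne with hneg | hpos
    · -- x.re < 0 : θ = π
      have hnx' : ‖x‖ = -x.re := by rw [hnx, abs_of_neg hneg]
      have hβeq : Real.cos β ≤ -1 := by
        have : ‖x‖ * Real.cos β ≤ -‖x‖ := by rw [hnx'] at hx3 ⊢; linarith
        have hpos' : 0 < ‖x‖ := by rw [hnx']; linarith
        nlinarith
      have hθ0h : π ≤ θ0 + h := by
        by_contra hcon
        push_neg at hcon
        have hβ' : β = θ0 + h := min_eq_left hcon.le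
        have : Real.cos β > Real.cos π :=
          Real.cos_lt_cos_of_nonneg_of_le_pi (by rw [hβ']; linarith) le_rfl
            (by rw [hβ']; exact hcon)
        rw [Real.cos_pi] at this; linarith
      refine ⟨‖x‖, π, hx1, hx2, ?_, ?_⟩
      · rw [abs_of_nonneg (by linarith)]; linarith
      · rw [smul_bpt, Real.cos_pi, Real.sin_pi, mul_zero, zero_smul, add_zero, hnx']
        conv_lhs => rw [hxeq]
        exact congrArg (fun t : ℝ => (t : HQ)) (by ring)
    · -- x.re > 0 : θ = 0
      have hnx' : ‖x‖ = x.re := by rw [hnx, abs_of_pos hpos]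
      have hαeq : 1 ≤ Real.cos α := by
        have hpos' : 0 < ‖x‖ := by rw [hnx']; exact hpos
        nlinarith [hx4, hnx']
      have hθ0h : θ0 ≤ h := by
        by_contra hcon
        push_neg at hcon
        have hα' : α = θ0 - h := max_eq_left (by linarith)
        have : Real.cos α < Real.cos 0 :=
          Real.cos_lt_cos_of_nonneg_of_le_pi le_rfl (by rw [hα']; linarith)
            (by rw [hα']; linarith)
        rw [Real.cos_zero] at this; linarith
      refine ⟨‖x‖, 0, hx1, hx2, ?_, ?_⟩
      · rw [abs_of_nonpos (by linarith)]; linarith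
      · rw [smul_bpt, Real.cos_zero, Real.sin_zero, mul_zero, zero_smul, add_zero, mul_one,
          hnx']
        exact hxeq
  -- inclusion 3 : A ∩ HalfSlice i ⊆ SBox i
  have incl3 : ∀ i ∈ Sph, ∀ x ∈ A, x ∈ HalfSlice i → x ∈ SBox i θ0 h := by
    rintro i hi x ⟨⟨hx1, hx2⟩, hx3, hx4⟩ ⟨-, x0, x1, hx1pos, hxeq⟩
    have hre : x.re = x0 := by rw [hxeq, re_mix, hi.1, mul_zero, add_zero]
    have hnx : ‖x‖ = Real.sqrt (x0 ^ 2 + x1 ^ 2) := by rw [hxeq, norm_mix hi]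
    obtain ⟨r, hrdef⟩ : ∃ r : ℝ, r = ‖x‖ := ⟨_, rfl⟩
    rw [← hrdef] at hx1 hx2 hx3 hx4 hnx
    have hrpos : 0 < r := by linarith
    have hr2 : r ^ 2 = x0 ^ 2 + x1 ^ 2 := by
      rw [hnx, Real.sq_sqrt (by positivity)]
    -- IVT for θ ↦ r * cos θ on [α, β]
    have hIVT := intermediate_value_Icc' hαβ
      (Continuous.continuousOn
        ((continuous_const.mul Real.continuous_cos : Continuous fun θ : ℝ => r * Real.cos θ)))
    have hmem : x0 ∈ Set.Icc (r * Real.cos β) (r * Real.cos α) :=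
      ⟨by rw [← hre]; exact hx3, by rw [← hre]; exact hx4⟩
    obtain ⟨θ, hθmem, hθeq⟩ := hIVT hmem
    obtain ⟨hθ1, hθ2⟩ := hθmem
    have hθ0r : 0 ≤ θ := le_trans hα0 hθ1
    have hθπ : θ ≤ π := le_trans hθ2 hβπ
    have hsin : 0 ≤ Real.sin θ := Real.sin_nonneg_of_nonneg_of_le_pi hθ0r hθπ
    have hx0 : x0 = r * Real.cos θ := hθeq.symm
    have hx1eq : x1 = r * Real.sin θ := by
      have hpyth := Real.sin_sq_add_cos_sq θ
      have hsq : x1 ^ 2 = (r * Real.sin θ) ^ 2 := by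
        linear_combination (-1 : ℝ) * hr2 - r ^ 2 * hpyth - (x0 + r * Real.cos θ) * hx0
      calc x1 = Real.sqrt (x1 ^ 2) := (Real.sqrt_sq hx1pos.le).symm
        _ = Real.sqrt ((r * Real.sin θ) ^ 2) := by rw [hsq]
        _ = r * Real.sin θ := Real.sqrt_sq (mul_nonneg hrpos.le hsin)
    refine ⟨r, θ, hx1, hx2, ?_, ?_⟩
    · rw [abs_le]; constructor
      · have : θ0 - h ≤ α := le_max_left _ _
        linarith
      · have : β ≤ θ0 + h := min_le_left _ _
        linarith
    · rw [smul_bpt, hxeq, hx0, hx1eq]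

  -- measure computation
  have hdecA := hdec (A.indicator 1) (measurable_one.indicator measA)
  rw [lintegral_indicator_one measA] at hdecA
  have hμR_A : μR A ≤ ENNReal.ofReal (E h * h) := by
    calc μR A ≤ μR (SBox iQ θ0 h ∪ {x : HQ | ¬(x.im = 0 ∧ ‖x‖ < 1)}) := by
          apply measure_mono
          intro x hx
          by_cases hB : x.im = 0 ∧ ‖x‖ < 1
          · exact Or.inl (incl2 x hx hB)
          · exact Or.inr hB
      _ ≤ μR (SBox iQ θ0 h) + μR {x : HQ | ¬(x.im = 0 ∧ ‖x‖ < 1)} := measure_union_le _ _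
      _ = μR (SBox iQ θ0 h) := by rw [hμR, add_zero]
      _ ≤ ENNReal.ofReal (E h * h) := hER iQ iQ_mem_Sph θ0 h hh
  have hμp_A : ∀ i ∈ Sph, μp i A ≤ ENNReal.ofReal (E h * h) := by
    intro i hi
    calc μp i A ≤ μp i (SBox i θ0 h ∪ (HalfSlice i)ᶜ) := by
          apply measure_mono
          intro x hx
          by_cases hB : x ∈ HalfSlice i
          · exact Or.inl (incl3 i hi x hx hB)
          · exact Or.inr hB
      _ ≤ μp i (SBox i θ0 h) + μp i (HalfSlice i)ᶜ := measure_union_le _ _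
      _ = μp i (SBox i θ0 h) := by rw [hsupp i hi, add_zero]
      _ ≤ ENNReal.ofReal (E h * h) := hEp i hi θ0 h hh
  have hint : ∫⁻ i in Sph, (∫⁻ x, A.indicator 1 x ∂(μp i)) ∂ν ≤
      ENNReal.ofReal (E h * h) * ν Set.univ := by
    calc ∫⁻ i in Sph, (∫⁻ x, A.indicator 1 x ∂(μp i)) ∂ν
        ≤ ∫⁻ _ in Sph, ENNReal.ofReal (E h * h) ∂ν := by
          apply setLIntegral_mono measurable_const
          intro i hi
          rw [lintegral_indicator_one measA]
          exact hμp_A i hi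
      _ = ENNReal.ofReal (E h * h) * ν Sph := by rw [setLIntegral_const]
      _ ≤ ENNReal.ofReal (E h * h) * ν Set.univ :=
          mul_le_mul_right (measure_mono (Set.subset_univ _)) _
  have key : μ A ≤ ENNReal.ofReal (E h * h) * (1 + ν Set.univ) := by
    rw [hdecA, mul_add, mul_one, lintegral_indicator_one measA]
    exact add_le_add hμR_A hint
  calc μ (SymBox θ0 h) ≤ μ A := measure_mono incl1
    _ ≤ ENNReal.ofReal (E h * h) * (1 + ν Set.univ) := key
    _ ≤ ENNReal.ofReal (ε * h) := by
        have hν1 : (1 : ℝ≥0∞) + ν Set.univ = ENNReal.ofReal (1 + C) := by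
          rw [ENNReal.ofReal_add zero_le_one hC, ENNReal.ofReal_one,
            ENNReal.ofReal_toReal (measure_ne_top ν _)]
        rw [hν1, ← ENNReal.ofReal_mul (mul_nonneg (hE0 h) hh.le)]
        apply ENNReal.ofReal_le_ofReal
        have h1 : E h * (1 + C) ≤ ε := by
          have := (le_div_iff₀ h1C).mp hEh.le
          linarith
        nlinarith [hE0 h, hh.le]
end
end

section
/- Let μ be the measure ∑_{n=1}^∞ n^{-3/2} δ_{a_n} on the quaternionic unit ball, where a_n = ((n-1)/n) i_n with pairwise distinct imaginary units i_n ∈ S. Then μ is a finite measure but μ is not a Carleson measure: sup over n of μ(S(π/2, 1/n))/(1/n) = +∞; indeed μ(S(π/2,1/n))·n ≥ √n · ∑_{ℓ=2}^∞ ℓ^{-3/2}. -/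
open MeasureTheory Real
open scoped ENNReal

noncomputable section

theorem stmt12 (I : ℕ → HQ) (hI : ∀ n, I n ∈ Sph) (hinj : Function.Injective I)
    (a : ℕ → HQ) (ha : ∀ n : ℕ, a n = (((n : ℝ) - 1) / (n : ℝ)) • I n)
    (μ : Measure HQ)
    (hμ : μ = Measure.sum fun n : ℕ =>
      (ENNReal.ofReal (((n : ℝ) + 1) ^ (-(3 / 2) : ℝ))) • Measure.dirac (a (n + 1))) :
    μ Set.univ < ⊤ ∧
    (∀ n : ℕ, 1 ≤ n →
      ENNReal.ofReal (Real.sqrt n * ∑' ℓ : ℕ, ((ℓ : ℝ) + 2) ^ (-(3 / 2) : ℝ)) ≤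
        (n : ℝ≥0∞) * μ (SymBox (Real.pi / 2) (1 / (n : ℝ)))) ∧
    ¬ ∃ C : ℝ, ∀ θ0 h : ℝ, 0 < h → μ (SymBox θ0 h) ≤ ENNReal.ofReal (C * h) := by
  have hz : (-(3/2) : ℝ) < -1 := by norm_num
  have hsum1 : Summable (fun m : ℕ => ((m : ℝ) + 1) ^ (-(3/2) : ℝ)) := by
    have := (Real.summable_nat_rpow (p := (-(3/2) : ℝ))).2 hz
    refine ((summable_nat_add_iff 1).2 this).congr fun m => ?_
    push_cast; ring_nf
  have hsum2 : Summable (fun ℓ : ℕ => ((ℓ : ℝ) + 2) ^ (-(3/2) : ℝ)) := by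
    have := (Real.summable_nat_rpow (p := (-(3/2) : ℝ))).2 hz
    refine ((summable_nat_add_iff 2).2 this).congr fun m => ?_
    push_cast; ring_nf
  have hnn1 : ∀ m : ℕ, 0 ≤ ((m : ℝ) + 1) ^ (-(3/2) : ℝ) :=
    fun m => Real.rpow_nonneg (by positivity) _
  have hnn2 : ∀ ℓ : ℕ, 0 ≤ ((ℓ : ℝ) + 2) ^ (-(3/2) : ℝ) :=
    fun ℓ => Real.rpow_nonneg (by positivity) _
  -- Part 2 first
  have key : ∀ n : ℕ, 1 ≤ n →
      ENNReal.ofReal (Real.sqrt n * ∑' ℓ : ℕ, ((ℓ : ℝ) + 2) ^ (-(3 / 2) : ℝ)) ≤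
        (n : ℝ≥0∞) * μ (SymBox (Real.pi / 2) (1 / (n : ℝ))) := by
    intro n hn
    haveI : NeZero n := ⟨by omega⟩
    have hnR : (1 : ℝ) ≤ (n : ℝ) := by exact_mod_cast hn
    have hnpos : (0 : ℝ) < n := by linarith
    -- membership of a_{m+1} in the box for m+1 ≥ n
    have hmem : ∀ m : ℕ, n ≤ m + 1 → a (m + 1) ∈ SymBox (Real.pi / 2) (1 / (n : ℝ)) := by
      intro m hm
      have hmR : (n : ℝ) ≤ (m : ℝ) + 1 := by exact_mod_cast hm
      refine Set.mem_biUnion (hI (m + 1)) ?_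
      refine ⟨(((m : ℝ) + 1) - 1) / ((m : ℝ) + 1), Real.pi / 2, ?_, ?_, ?_, ?_⟩
      · have h1 : (1 : ℝ) / ((m : ℝ) + 1) ≤ 1 / n :=
          one_div_le_one_div_of_le hnpos hmR
        have h2 : (((m : ℝ) + 1) - 1) / ((m : ℝ) + 1) = 1 - 1 / ((m : ℝ) + 1) := by
          field_simp
        rw [h2]; linarith
      · rw [div_lt_one (by positivity)]; linarith
      · simp only [sub_self, abs_zero]; positivity
      · rw [ha]
        push_cast
        congr 1
        unfold bpt
        simp [Real.cos_pi_div_two, Real.sin_pi_div_two]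
    -- lower bound on the measure by the tail sum
    set S := SymBox (Real.pi / 2) (1 / (n : ℝ)) with hS
    set f : ℕ → ℝ≥0∞ := fun m =>
      ENNReal.ofReal (((m : ℝ) + 1) ^ (-(3/2) : ℝ)) * Measure.dirac (a (m + 1)) S with hf
    have h1 : ∑' m, f m ≤ μ S := by
      rw [hμ]
      have := MeasureTheory.Measure.le_sum_apply
        (fun m : ℕ => (ENNReal.ofReal (((m : ℝ) + 1) ^ (-(3/2) : ℝ))) •
          Measure.dirac (a (m + 1))) S
      simpa [hf, Measure.smul_apply, smul_eq_mul] using this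
    have h2 : ∑' k : ℕ, ENNReal.ofReal (((k : ℝ) + n) ^ (-(3/2) : ℝ)) ≤ ∑' m, f m := by
      have h3 : ∑' k : ℕ, f (k + (n - 1)) ≤ ∑' m, f m :=
        ENNReal.tsum_comp_le_tsum_of_injective (add_left_injective (n - 1)) f
      refine le_trans (le_of_eq (tsum_congr fun k => ?_)) h3
      have hk : a (k + (n - 1) + 1) ∈ S := hmem _ (by omega)
      rw [hf]
      simp only [MeasureTheory.Measure.dirac_apply_of_mem hk, mul_one]
      congr 2
      have : ((k + (n - 1) : ℕ) : ℝ) = (k : ℝ) + (n : ℝ) - 1 := by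
        push_cast [Nat.cast_sub hn]; ring
      rw [this]; ring_nf
    -- grouping argument
    set G : ℕ → ℝ≥0∞ := fun k => ENNReal.ofReal (((k : ℝ) + n) ^ (-(3/2) : ℝ)) with hG
    have e1 : ∑' k, G k = ∑' p : ℕ × Fin n, G (p.1 * n + p.2) := by
      rw [← ((Nat.divModEquiv n).symm).tsum_eq G]; rfl
    have hterm : ∀ p : ℕ × Fin n,
        ENNReal.ofReal ((((p.1 : ℝ) + 2) * n) ^ (-(3/2) : ℝ)) ≤ G (p.1 * n + p.2) := by
      intro p
      apply ENNReal.ofReal_le_ofReal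
      apply Real.rpow_le_rpow_of_nonpos
      · positivity
      · have : ((p.2 : ℕ) : ℝ) < n := by exact_mod_cast p.2.is_lt
        push_cast
        nlinarith
      · norm_num
    have hreal : ∀ q : ℕ, (n : ℝ) * ((n : ℝ) * (((q : ℝ) + 2) * n) ^ (-(3/2) : ℝ)) =
        Real.sqrt n * ((q : ℝ) + 2) ^ (-(3/2) : ℝ) := by
      intro q
      rw [Real.mul_rpow (by positivity) (by positivity), Real.sqrt_eq_rpow]
      have : (n : ℝ) * ((n : ℝ) * (((q : ℝ) + 2) ^ (-(3/2) : ℝ) * (n : ℝ) ^ (-(3/2) : ℝ)))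
          = ((n : ℝ) ^ (1 : ℝ) * (n : ℝ) ^ (1 : ℝ) * (n : ℝ) ^ (-(3/2) : ℝ)) *
            ((q : ℝ) + 2) ^ (-(3/2) : ℝ) := by
        rw [Real.rpow_one]; ring
      rw [this, ← Real.rpow_add hnpos, ← Real.rpow_add hnpos]
      norm_num
    calc ENNReal.ofReal (Real.sqrt n * ∑' ℓ : ℕ, ((ℓ : ℝ) + 2) ^ (-(3/2) : ℝ))
        = ∑' q : ℕ, ENNReal.ofReal (Real.sqrt n * ((q : ℝ) + 2) ^ (-(3/2) : ℝ)) := by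
          rw [ENNReal.ofReal_mul (Real.sqrt_nonneg _),
            ENNReal.ofReal_tsum_of_nonneg hnn2 hsum2, ← ENNReal.tsum_mul_left]
          exact tsum_congr fun q => (ENNReal.ofReal_mul (Real.sqrt_nonneg _)).symm
      _ = ∑' q : ℕ, (n : ℝ≥0∞) * ((n : ℝ≥0∞) *
            ENNReal.ofReal ((((q : ℝ) + 2) * n) ^ (-(3/2) : ℝ))) := by
          refine tsum_congr fun q => ?_
          rw [← hreal q, ← ENNReal.ofReal_natCast n,
            ← ENNReal.ofReal_mul (by positivity), ← ENNReal.ofReal_mul (by positivity)]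
      _ = (n : ℝ≥0∞) * ∑' q : ℕ, ∑' _ : Fin n,
            ENNReal.ofReal ((((q : ℝ) + 2) * n) ^ (-(3/2) : ℝ)) := by
          rw [ENNReal.tsum_mul_left]
          congr 1
          refine tsum_congr fun q => ?_
          simp [tsum_fintype, Finset.sum_const, nsmul_eq_mul]
      _ = (n : ℝ≥0∞) * ∑' p : ℕ × Fin n,
            ENNReal.ofReal ((((p.1 : ℝ) + 2) * n) ^ (-(3/2) : ℝ)) := by
          congr 1
          exact (ENNReal.tsum_prod
            (f := fun (q : ℕ) (_ : Fin n) =>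
              ENNReal.ofReal ((((q : ℝ) + 2) * n) ^ (-(3/2) : ℝ)))).symm
      _ ≤ (n : ℝ≥0∞) * ∑' p : ℕ × Fin n, G (p.1 * n + p.2) :=
          mul_le_mul_right (ENNReal.tsum_le_tsum hterm) _
      _ = (n : ℝ≥0∞) * ∑' k, G k := by rw [e1]
      _ ≤ (n : ℝ≥0∞) * μ S := mul_le_mul_right (le_trans h2 h1) _
  refine ⟨?_, key, ?_⟩
  · -- finiteness
    rw [hμ, MeasureTheory.Measure.sum_apply _ MeasurableSet.univ]
    have : ∀ m : ℕ, ((ENNReal.ofReal (((m : ℝ) + 1) ^ (-(3/2) : ℝ))) •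
        Measure.dirac (a (m + 1))) Set.univ = ENNReal.ofReal (((m : ℝ) + 1) ^ (-(3/2) : ℝ)) := by
      intro m
      rw [Measure.smul_apply, smul_eq_mul,
        MeasureTheory.Measure.dirac_apply_of_mem (Set.mem_univ _), mul_one]
    rw [tsum_congr this, ← ENNReal.ofReal_tsum_of_nonneg hnn1 hsum1]
    exact ENNReal.ofReal_lt_top
  · -- not Carleson
    rintro ⟨C, hC⟩
    set Sg : ℝ := ∑' ℓ : ℕ, ((ℓ : ℝ) + 2) ^ (-(3/2) : ℝ) with hSg
    have hSgpos : 0 < Sg := Summable.tsum_pos hsum2 hnn2 0 (by positivity)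
    obtain ⟨n0, hn0⟩ := exists_nat_gt ((C / Sg) ^ 2)
    set n : ℕ := n0 + 1 with hn
    have hn1 : 1 ≤ n := by omega
    have hnpos : (0 : ℝ) < n := by positivity
    have hch : (0 : ℝ) < 1 / n := by positivity
    have h1 := key n hn1
    have h2 : (n : ℝ≥0∞) * μ (SymBox (Real.pi / 2) (1 / (n : ℝ))) ≤ ENNReal.ofReal C := by
      refine le_trans (mul_le_mul_right (hC _ _ hch) _) (le_of_eq ?_)
      rw [← ENNReal.ofReal_natCast n, ← ENNReal.ofReal_mul (by positivity)]
      congr 1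
      field_simp
    have h3 : ENNReal.ofReal (Real.sqrt n * Sg) ≤ ENNReal.ofReal C := le_trans h1 h2
    have hsqpos : 0 < Real.sqrt n * Sg :=
      mul_pos (Real.sqrt_pos.2 hnpos) hSgpos
    have h4 : Real.sqrt n * Sg ≤ C := by
      rcases ENNReal.ofReal_le_ofReal_iff'.1 h3 with h | h
      · exact h
      · linarith
    have h5 : Real.sqrt n ≤ C / Sg := (le_div_iff₀ hSgpos).2 h4
    have h6 : C / Sg < Real.sqrt n := by
      have : (C / Sg) ^ 2 < (n : ℝ) := by
        refine lt_of_lt_of_le hn0 ?_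
        exact_mod_cast Nat.le_succ n0
      calc C / Sg ≤ |C / Sg| := le_abs_self _
        _ = Real.sqrt ((C / Sg) ^ 2) := (Real.sqrt_sq_eq_abs _).symm
        _ < Real.sqrt n := Real.sqrt_lt_sqrt (sq_nonneg _) this
    linarith
end
end
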